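/- arXiv:2208.00161 — 4 statements merged into one kernel-verified Lean document; each statement's English description precedes it below -/
import Mathlib

section
/- For the Ohmic relaxation function Φ(ω) = γ₀ / [(ω² − ω₀² − ω ω_c)² + (ω γ₀)²] with γ₀ > 0, ω₀ > 0, ω_c ∈ ℝ, the integral ∫_{-∞}^{∞} ω² Φ(ω) dω equals π. -/
/-!
Writing `u = ω - ω₀² / ω`, the denominator of `Φ` is `ω² ((u - ω_c)² + γ₀²)`, so `ω² Φ(ω)` is a
Lorentzian in `u`. The map `ω ↦ ω - a / ω` (`a > 0`) sends each half-line bijectively onto `ℝ`,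
with inverse branches `ω₊(u) = (u + √(u² + 4a)) / 2` and `ω₋(u) = -ω₊(-u)` whose derivatives add
up to `1`. Hence `∫ F(ω - a / ω) dω = ∫ F(u) du` (Glasser's master theorem), and the integral is
that of the Lorentzian, `π`.
-/

open Real MeasureTheory Set

section Glasser

variable {a : ℝ}

/-- The inverse of `ω ↦ ω - a / ω` on `(0, ∞)`. -/
noncomputable def glasserBranch (a u : ℝ) : ℝ := (u + √(u ^ 2 + 4 * a)) / 2

noncomputable def glasserWeight (a u : ℝ) : ℝ := (1 + u / √(u ^ 2 + 4 * a)) / 2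

lemma abs_lt_sqrt_sq_add_four_mul (ha : 0 < a) (u : ℝ) : |u| < √(u ^ 2 + 4 * a) := by
  rw [← sqrt_sq_eq_abs]
  exact sqrt_lt_sqrt (sq_nonneg u) (by linarith)

lemma glasserBranch_pos (ha : 0 < a) (u : ℝ) : 0 < glasserBranch a u := by
  have := abs_lt_sqrt_sq_add_four_mul ha u
  unfold glasserBranch
  linarith [neg_abs_le u]

lemma glasserBranch_sub_div (ha : 0 < a) (u : ℝ) :
    glasserBranch a u - a / glasserBranch a u = u := by
  have hr := (glasserBranch_pos ha u).ne'
  have hsq : √(u ^ 2 + 4 * a) ^ 2 = u ^ 2 + 4 * a := sq_sqrt (by positivity)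
  field_simp
  unfold glasserBranch
  linear_combination hsq / 4

lemma glasserBranch_sub_div_of_pos (ha : 0 ≤ a) {ω : ℝ} (hω : 0 < ω) :
    glasserBranch a (ω - a / ω) = ω := by
  have hsq : (ω - a / ω) ^ 2 + 4 * a = (ω + a / ω) ^ 2 := by
    field_simp
    ring
  rw [glasserBranch, hsq, sqrt_sq (by positivity)]
  ring

lemma range_glasserBranch (ha : 0 < a) : range (glasserBranch a) = Ioi 0 := by
  refine subset_antisymm (range_subset_iff.2 (glasserBranch_pos ha)) fun ω (hω : 0 < ω) => ?_
  exact ⟨ω - a / ω, glasserBranch_sub_div_of_pos ha.le hω⟩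

lemma injective_glasserBranch (ha : 0 < a) : Function.Injective (glasserBranch a) :=
  Function.LeftInverse.injective (g := fun ω => ω - a / ω) (glasserBranch_sub_div ha)

lemma hasDerivAt_glasserBranch (ha : 0 < a) (u : ℝ) :
    HasDerivAt (glasserBranch a) (glasserWeight a u) u := by
  have hpos : 0 < u ^ 2 + 4 * a := by positivity
  have hsqrt : HasDerivAt (fun u => √(u ^ 2 + 4 * a)) (u / √(u ^ 2 + 4 * a)) u := by
    convert ((hasDerivAt_pow 2 u).add_const (4 * a)).sqrt hpos.ne' using 1
    field_simp
    norm_num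
    ring
  exact ((hasDerivAt_id u).add hsqrt).div_const 2

lemma glasserWeight_pos (ha : 0 < a) (u : ℝ) : 0 < glasserWeight a u := by
  have h := abs_lt_sqrt_sq_add_four_mul ha u
  have : -1 < u / √(u ^ 2 + 4 * a) := by
    rw [lt_div_iff₀ ((abs_nonneg u).trans_lt h)]
    linarith [neg_abs_le u]
  unfold glasserWeight
  linarith

lemma glasserWeight_neg_add (a u : ℝ) : glasserWeight a (-u) + glasserWeight a u = 1 := by
  simp only [glasserWeight, neg_sq, neg_div]
  ring

lemma abs_glasserWeight_le_one (ha : 0 < a) (u : ℝ) : |glasserWeight a u| ≤ 1 := by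
  rw [abs_of_pos (glasserWeight_pos ha u), ← glasserWeight_neg_add a u]
  linarith [glasserWeight_pos ha (-u)]

lemma measurable_glasserWeight (a : ℝ) : Measurable (glasserWeight a) := by
  unfold glasserWeight
  fun_prop

variable {E : Type*} [NormedAddCommGroup E] [NormedSpace ℝ E]

lemma integral_Ioi_comp_sub_div (ha : 0 < a) (F : ℝ → E) :
    ∫ ω in Ioi 0, F (ω - a / ω) = ∫ u, glasserWeight a u • F u := by
  rw [← range_glasserBranch ha, ← image_univ,
    integral_image_eq_integral_abs_deriv_smul MeasurableSet.univ
      (fun u _ => (hasDerivAt_glasserBranch ha u).hasDerivWithinAt)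
      (injective_glasserBranch ha).injOn, Measure.restrict_univ]
  simp_rw [abs_of_pos (glasserWeight_pos ha _), glasserBranch_sub_div ha]

lemma integrable_glasserWeight_smul (ha : 0 < a) {F : ℝ → E} (hF : Integrable F) :
    Integrable fun u => glasserWeight a u • F u :=
  hF.bdd_smul 1 (measurable_glasserWeight a).aestronglyMeasurable
    (Filter.Eventually.of_forall (abs_glasserWeight_le_one ha))

lemma integrableOn_Ioi_comp_sub_div (ha : 0 < a) {F : ℝ → E} (hF : Integrable F) :
    IntegrableOn (fun ω => F (ω - a / ω)) (Ioi 0) := by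
  rw [← range_glasserBranch ha, ← image_univ,
    integrableOn_image_iff_integrableOn_abs_deriv_smul MeasurableSet.univ
      (fun u _ => (hasDerivAt_glasserBranch ha u).hasDerivWithinAt)
      (injective_glasserBranch ha).injOn, integrableOn_univ]
  simp_rw [abs_of_pos (glasserWeight_pos ha _), glasserBranch_sub_div ha]
  exact integrable_glasserWeight_smul ha hF

theorem integral_comp_sub_div (ha : 0 < a) {F : ℝ → E} (hF : Integrable F) :
    ∫ ω, F (ω - a / ω) = ∫ u, F u := by
  have hodd : ∀ ω : ℝ, -ω - a / -ω = -(ω - a / ω) := fun ω => by rw [div_neg]; ring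
  have hleft : IntegrableOn (fun ω => F (ω - a / ω)) (Iic 0) := by
    have := integrableOn_Ioi_comp_sub_div ha hF.comp_neg
    simp_rw [← hodd] at this
    rw [← neg_zero] at this
    simpa using this.comp_neg_Iio.congr_set_ae Iio_ae_eq_Iic.symm
  rw [← intervalIntegral.integral_Iic_add_Ioi hleft (integrableOn_Ioi_comp_sub_div ha hF),
    ← neg_zero, ← integral_comp_neg_Ioi, neg_zero]
  simp_rw [hodd]
  rw [integral_Ioi_comp_sub_div ha (fun u => F (-u)), integral_Ioi_comp_sub_div ha,
    ← integral_neg_eq_self (fun u => glasserWeight a u • F (-u)), ← integral_add]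
  · simp only [neg_neg, ← add_smul, glasserWeight_neg_add, one_smul]
  · exact (integrable_glasserWeight_smul ha hF.comp_neg).comp_neg
  · exact integrable_glasserWeight_smul ha hF

end Glasser

section Lorentzian

open ProbabilityTheory

lemma lorentzian_eq_pi_mul_cauchyPDFReal (c : ℝ) {γ : ℝ} (hγ : 0 ≤ γ) :
    (fun u => γ / ((u - c) ^ 2 + γ ^ 2)) = fun u => π * cauchyPDFReal c γ.toNNReal u := by
  ext u
  rw [cauchyPDFReal_def, Real.coe_toNNReal γ hγ]
  field_simp

lemma integrable_lorentzian (c : ℝ) {γ : ℝ} (hγ : 0 ≤ γ) :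
    Integrable fun u => γ / ((u - c) ^ 2 + γ ^ 2) := by
  rw [lorentzian_eq_pi_mul_cauchyPDFReal c hγ]
  exact (integrable_cauchyPDFReal c).const_mul π

lemma integral_lorentzian (c : ℝ) {γ : ℝ} (hγ : 0 < γ) :
    ∫ u, γ / ((u - c) ^ 2 + γ ^ 2) = π := by
  rw [lorentzian_eq_pi_mul_cauchyPDFReal c hγ.le, integral_const_mul,
    integral_cauchyPDFReal_eq_one c (by simpa using hγ), mul_one]

end Lorentzian

lemma sq_mul_div_eq_lorentzian_comp_sub_div (a c γ : ℝ) {ω : ℝ} (hω : ω ≠ 0) :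
    ω ^ 2 * (γ / ((ω ^ 2 - a - ω * c) ^ 2 + (ω * γ) ^ 2)) =
      γ / (((ω - a / ω) - c) ^ 2 + γ ^ 2) := by
  have hden : (ω ^ 2 - a - ω * c) ^ 2 + (ω * γ) ^ 2 = ω ^ 2 * (((ω - a / ω) - c) ^ 2 + γ ^ 2) := by
    field_simp
  rw [hden, ← mul_div_assoc, mul_div_mul_left _ _ (pow_ne_zero 2 hω)]

/-- For the Ohmic relaxation function `Φ(ω) = γ₀ / ((ω² − ω₀² − ω ω_c)² + (ω γ₀)²)`,
the integral of `ω² Φ(ω)` over the real line equals `π`. -/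
theorem ohmic_relaxation_normalization
    (γ₀ ω₀ ω_c : ℝ) (hγ : 0 < γ₀) (hω₀ : 0 < ω₀) :
    ∫ ω : ℝ, ω ^ 2 * (γ₀ / ((ω ^ 2 - ω₀ ^ 2 - ω * ω_c) ^ 2 + (ω * γ₀) ^ 2)) = π := by
  calc ∫ ω : ℝ, ω ^ 2 * (γ₀ / ((ω ^ 2 - ω₀ ^ 2 - ω * ω_c) ^ 2 + (ω * γ₀) ^ 2))
      = ∫ ω : ℝ, γ₀ / (((ω - ω₀ ^ 2 / ω) - ω_c) ^ 2 + γ₀ ^ 2) :=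
        integral_congr_ae <| (volume.ae_ne 0).mono fun ω hω =>
          sq_mul_div_eq_lorentzian_comp_sub_div _ _ _ hω
    _ = ∫ u : ℝ, γ₀ / ((u - ω_c) ^ 2 + γ₀ ^ 2) :=
        integral_comp_sub_div (a := ω₀ ^ 2) (by positivity) (integrable_lorentzian ω_c hγ.le)
    _ = π := integral_lorentzian ω_c hγ
end

section
/- The function P_k(ω) = (1/π) ω² [Φ(ω) + Φ(−ω)], with Φ the Ohmic relaxation function Φ(ω) = γ₀ / [(ω² − ω₀² − ω ω_c)² + (ω γ₀)²] and γ₀ > 0, is a probability density on [0, ∞): it is nonnegative for all ω ≥ 0 and ∫₀^∞ P_k(ω) dω = 1. -/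
/-!
Let `a, b` be the roots of `z² - (ω_c + iγ₀) z - ω₀²`. Their product `-ω₀²` is a negative real
and their sum has positive imaginary part, so both lie in the upper half-plane, and
`ω² Φ(ω) = Im (ω / ((ω - a)(ω - b))) = Im (1 / (ω - a)) + Im (b / ((ω - a)(ω - b)))`.
The first term is a Lorentzian with antiderivative `arctan ((ω - Re a) / Im a)`, rising by `π`
across the real line. The second has an antiderivative vanishing at `±∞`: `-b / (ω - a)` if `a = b`, and otherwise
`b log ((ω - a) / (ω - b)) / (a - b)`, where with both poles on the same side of `ℝ` the quotient
never meets the branch cut and tends to `1`.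
Finally `∫₀^∞ ω² (Φ(ω) + Φ(-ω)) dω = ∫_ℝ ω² Φ(ω) dω`, and the integrand is nonnegative, so the
improper integral is the total increase of the antiderivative.
-/

open Real MeasureTheory Filter Topology Bornology

lemma ofReal_sub_ne_zero {c : ℂ} (hc : c.im ≠ 0) (x : ℝ) : (x : ℂ) - c ≠ 0 := fun h =>
  hc (by simpa using congrArg Complex.im h)

lemma tendsto_inv_ofReal_sub_cobounded (c : ℂ) :
    Tendsto (fun x : ℝ => ((x : ℂ) - c)⁻¹) (cobounded ℝ) (𝓝 0) :=
  tendsto_inv₀_cobounded.comp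
    ((tendsto_sub_const_cobounded c).comp (RCLike.tendsto_ofReal_cobounded_cobounded ℂ))

lemma HasDerivAt.complex_im {f : ℝ → ℂ} {f' : ℂ} {x : ℝ} (h : HasDerivAt f f' x) :
    HasDerivAt (fun t => (f t).im) f'.im x :=
  Complex.imCLM.hasFDerivAt.comp_hasDerivAt x h

lemma hasDerivAt_arctan_sub_re_div_im {c : ℂ} (hc : c.im ≠ 0) (x : ℝ) :
    HasDerivAt (fun x => arctan ((x - c.re) / c.im)) ((x - c)⁻¹ : ℂ).im x := by
  refine (((hasDerivAt_id' x).sub_const c.re).div_const c.im).arctan.congr_deriv ?_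
  rw [Complex.inv_im, Complex.normSq_apply]
  simp only [Complex.sub_re, Complex.sub_im, Complex.ofReal_re, Complex.ofReal_im]
  field_simp
  ring

lemma ofReal_sub_div_ofReal_sub_mem_slitPlane {a b : ℂ} (ha : 0 < a.im) (hb : 0 < b.im)
    (x : ℝ) : ((x : ℂ) - a) / (x - b) ∈ Complex.slitPlane := by
  set z := ((x : ℂ) - a) / (x - b)
  rw [Complex.mem_slitPlane_iff]
  by_contra! hz
  have hmul : (x : ℂ) - a = z * (x - b) := (div_mul_cancel₀ _ (ofReal_sub_ne_zero hb.ne' x)).symm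
  have him := congrArg Complex.im hmul
  simp only [Complex.sub_im, Complex.ofReal_im, Complex.mul_im, Complex.sub_re,
    Complex.ofReal_re, hz.2] at him
  nlinarith

lemma exists_hasDerivAt_inv_mul_tendsto_zero {a b : ℂ} (ha : 0 < a.im) (hb : 0 < b.im) :
    ∃ Q : ℝ → ℂ, (∀ x : ℝ, HasDerivAt Q ((x - a) * (x - b))⁻¹ x) ∧
      Tendsto Q (cobounded ℝ) (𝓝 0) := by
  rcases eq_or_ne a b with rfl | hab
  · refine ⟨fun x => -((x : ℂ) - a)⁻¹, fun x => ?_, ?_⟩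
    · have hx := ofReal_sub_ne_zero ha.ne' x
      refine (((hasDerivAt_id' (x : ℂ)).sub_const a).fun_inv hx).fun_neg.comp_ofReal.congr_deriv ?_
      field_simp
    · simpa using (tendsto_inv_ofReal_sub_cobounded a).neg
  · refine ⟨fun x => Complex.log ((x - a) / (x - b)) / (a - b), fun x => ?_, ?_⟩
    · have hxa := ofReal_sub_ne_zero ha.ne' x
      have hxb := ofReal_sub_ne_zero hb.ne' x
      have hquot := ((hasDerivAt_id' (x : ℂ)).sub_const a).fun_div
        ((hasDerivAt_id' (x : ℂ)).sub_const b) hxb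
      refine ((hquot.comp_ofReal.clog_real
        (ofReal_sub_div_ofReal_sub_mem_slitPlane ha hb x)).div_const (a - b)).congr_deriv ?_
      field_simp [sub_ne_zero.mpr hab]
      ring
    · have hquot : Tendsto (fun x : ℝ => ((x : ℂ) - a) / (x - b)) (cobounded ℝ) (𝓝 1) := by
        have := ((tendsto_inv_ofReal_sub_cobounded b).const_mul (b - a)).const_add 1
        rw [mul_zero, add_zero] at this
        refine this.congr fun x => ?_
        have hxb := ofReal_sub_ne_zero hb.ne' x
        field_simp
        ring
      simpa using ((continuousAt_clog Complex.one_mem_slitPlane).tendsto.comp hquot).div_const (a - b)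

lemma exists_hasDerivAt_im_div_tendsto {a b : ℂ} (ha : 0 < a.im) (hb : 0 < b.im) :
    ∃ G : ℝ → ℝ, (∀ x : ℝ, HasDerivAt G ((x : ℂ) / ((x - a) * (x - b))).im x) ∧
      Tendsto G atTop (𝓝 (π / 2)) ∧ Tendsto G atBot (𝓝 (-(π / 2))) := by
  obtain ⟨Q, hQ, hQ_lim⟩ := exists_hasDerivAt_inv_mul_tendsto_zero ha hb
  have hbQ : Tendsto (fun x => (b * Q x).im) (cobounded ℝ) (𝓝 0) := by
    simpa only [mul_zero, Complex.zero_im, Function.comp_def] using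
      (Complex.continuous_im.tendsto _).comp (hQ_lim.const_mul b)
  rw [IsOrderBornology.cobounded_eq, tendsto_sup] at hbQ
  refine ⟨fun x => arctan ((x - a.re) / a.im) + (b * Q x).im, fun x => ?_, ?_, ?_⟩
  · refine ((hasDerivAt_arctan_sub_re_div_im ha.ne' x).add
      ((hQ x).const_mul b).complex_im).congr_deriv ?_
    have hxa := ofReal_sub_ne_zero ha.ne' x
    have hxb := ofReal_sub_ne_zero hb.ne' x
    rw [← Complex.add_im]
    field_simp
    rw [sub_add_cancel]
  · have harg : Tendsto (fun x => (x - a.re) / a.im) atTop atTop :=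
      (tendsto_atTop_add_const_right _ _ tendsto_id).atTop_div_const ha
    simpa using ((tendsto_arctan_atTop.mono_right nhdsWithin_le_nhds).comp harg).add hbQ.2
  · have harg : Tendsto (fun x => (x - a.re) / a.im) atBot atBot :=
      (tendsto_atBot_add_const_right _ _ tendsto_id).atBot_div_const ha
    simpa using ((tendsto_arctan_atBot.mono_right nhdsWithin_le_nhds).comp harg).add hbQ.1

lemma im_pos_of_mul_eq_ofReal_neg {a b : ℂ} {p : ℝ} (hp : p < 0) (hab : a * b = p)
    (hsum : 0 < (a + b).im) : 0 < a.im := by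
  have hnormSq : Complex.normSq a * b.im = -(a.im * p) := by
    have := congrArg Complex.im (congrArg (starRingEnd ℂ a * ·) hab)
    simp only [← mul_assoc, ← Complex.normSq_eq_conj_mul_self] at this
    simpa [Complex.mul_im] using this
  have ha : a ≠ 0 := by
    rintro rfl
    rw [zero_mul, eq_comm, Complex.ofReal_eq_zero] at hab
    exact hp.ne hab
  have hpos := Complex.normSq_pos.mpr ha
  rw [Complex.add_im] at hsum
  nlinarith

lemma exists_add_eq_mul_eq_im_pos {s : ℂ} (hs : 0 < s.im) {p : ℝ} (hp : p < 0) :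
    ∃ a b : ℂ, a + b = s ∧ a * b = p ∧ 0 < a.im ∧ 0 < b.im := by
  obtain ⟨r, hr⟩ := IsAlgClosed.exists_eq_mul_self (s ^ 2 - 4 * p)
  have hsum : (s + r) / 2 + (s - r) / 2 = s := by ring
  have hprod : (s + r) / 2 * ((s - r) / 2) = p := by linear_combination (1 / 4 : ℂ) * hr
  refine ⟨(s + r) / 2, (s - r) / 2, hsum, hprod, ?_, ?_⟩
  · exact im_pos_of_mul_eq_ofReal_neg hp hprod (by rwa [hsum])
  · rw [mul_comm] at hprod
    rw [add_comm] at hsum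
    exact im_pos_of_mul_eq_ofReal_neg hp hprod (by rwa [hsum])

lemma im_ofReal_div_ofReal_sub_mul_ofReal_sub {a b : ℂ} {p : ℝ} (hab : a * b = p) (x : ℝ) :
    ((x : ℂ) / ((x - a) * (x - b))).im
      = (a + b).im * x ^ 2 / ((x ^ 2 - (a + b).re * x + p) ^ 2 + ((a + b).im * x) ^ 2) := by
  have hden : ((x : ℂ) - a) * (x - b) = x ^ 2 - (a + b) * x + p := by rw [← hab]; ring
  rw [hden, Complex.div_im, Complex.normSq_apply]
  simp only [Complex.add_re, Complex.add_im, Complex.sub_re, Complex.sub_im, Complex.mul_re,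
    Complex.mul_im, Complex.ofReal_re, Complex.ofReal_im, pow_two]
  ring

lemma integral_Ioi_add_comp_neg_of_hasDerivAt {f G : ℝ → ℝ} {A B : ℝ}
    (hG : ∀ x, HasDerivAt G (f x) x) (hf : ∀ x, 0 < x → 0 ≤ f x + f (-x))
    (hA : Tendsto G atTop (𝓝 A)) (hB : Tendsto G atBot (𝓝 B)) :
    ∫ x in Set.Ioi 0, (f x + f (-x)) = A - B := by
  have hderiv : ∀ x, HasDerivAt (fun x => G x - G (-x)) (f x + f (-x)) x := fun x =>
    ((hG x).sub ((hG (-x)).comp x (hasDerivAt_neg x))).congr_deriv (by ring)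
  have hlim : Tendsto (fun x => G x - G (-x)) atTop (𝓝 (A - B)) :=
    hA.sub (hB.comp tendsto_neg_atTop_atBot)
  simpa using integral_Ioi_of_hasDerivAt_of_nonneg' (fun x _ => hderiv x) hf hlim

/-- `P_k(ω) = (1/π) ω² (Φ(ω) + Φ(−ω))` with the Ohmic relaxation function `Φ` is a
probability density on `[0,∞)`: it is nonnegative there and integrates to `1`. -/
theorem Pk_probability_density
    (γ₀ ω₀ ω_c : ℝ) (hγ : 0 < γ₀) (hω₀ : 0 < ω₀)
    (Φ : ℝ → ℝ)
    (hΦ : ∀ ω, Φ ω = γ₀ / ((ω ^ 2 - ω₀ ^ 2 - ω * ω_c) ^ 2 + (ω * γ₀) ^ 2))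
    (P_k : ℝ → ℝ)
    (hP : ∀ ω, P_k ω = (1 / π) * ω ^ 2 * (Φ ω + Φ (-ω))) :
    (∀ ω : ℝ, 0 ≤ ω → 0 ≤ P_k ω) ∧ (∫ ω in Set.Ioi (0 : ℝ), P_k ω = 1) := by
  have hΦ_nonneg : ∀ ω, 0 ≤ Φ ω := fun ω => by rw [hΦ]; positivity
  refine ⟨fun ω _ => ?_, ?_⟩
  · rw [hP]
    exact mul_nonneg (by positivity) (add_nonneg (hΦ_nonneg ω) (hΦ_nonneg (-ω)))
  obtain ⟨a, b, hsum, hab, ha, hb⟩ :=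
    exists_add_eq_mul_eq_im_pos (s := ω_c + γ₀ * Complex.I) (by simpa using hγ)
      (p := -ω₀ ^ 2) (by nlinarith)
  obtain ⟨G, hG, hG_top, hG_bot⟩ := exists_hasDerivAt_im_div_tendsto ha hb
  set f := fun x : ℝ => ((x : ℂ) / ((x - a) * (x - b))).im
  have hf : ∀ ω, f ω = ω ^ 2 * Φ ω := fun ω => by
    simp only [f, im_ofReal_div_ofReal_sub_mul_ofReal_sub hab, hsum, hΦ, Complex.add_re,
      Complex.add_im, Complex.mul_re, Complex.mul_im, Complex.ofReal_re, Complex.ofReal_im,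
      Complex.I_re, Complex.I_im]
    ring
  have hf_nonneg : ∀ ω, 0 ≤ f ω := fun ω => by rw [hf]; exact mul_nonneg (sq_nonneg ω) (hΦ_nonneg ω)
  have hP_f : ∀ ω, P_k ω = π⁻¹ * (f ω + f (-ω)) := fun ω => by rw [hP, hf, hf]; ring
  calc ∫ ω in Set.Ioi (0 : ℝ), P_k ω
      = π⁻¹ * ∫ ω in Set.Ioi (0 : ℝ), (f ω + f (-ω)) := by
        simp_rw [hP_f]; exact integral_const_mul _ _
    _ = π⁻¹ * (π / 2 - -(π / 2)) := by
        rw [integral_Ioi_add_comp_neg_of_hasDerivAt (f := f) hG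
          (fun ω _ => add_nonneg (hf_nonneg ω) (hf_nonneg (-ω))) hG_top hG_bot]
    _ = 1 := by field_simp; ring
end

section
/- For all real x ≠ 0, x coth x = 1 + 2 Σ_{n=1}^∞ x²/(x² + n²π²), with the series converging absolutely. -/
/-!
On the imaginary axis the cotangent becomes the hyperbolic cotangent: for `z = i x / π` one has
`π z cot (π z) = x coth x` and `2 z² / (z² - n²) = 2 x² / (x² + n² π²)`. So the expansion
follows from the Mittag-Leffler series `π cot (π z) = 1 / z + Σ 2 z / (z² - n²)`, the
logarithmic derivative of Euler's sine product.
-/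

/-- Hyperbolic cotangent. -/
noncomputable def coth (x : ℝ) : ℝ := Real.cosh x / Real.sinh x

open Real

namespace Complex

theorem mul_I_mul_cot_mul_I (z : ℂ) : z * I * cot (z * I) = z * cosh z / sinh z := by
  rw [Complex.cot_eq_cos_div_sin, cos_mul_I, sin_mul_I]
  by_cases h : sinh z = 0
  · simp [h]
  · field_simp

theorem mul_I_div_pi_mem_integerComplement {x : ℝ} (hx : x ≠ 0) :
    x * I / π ∈ integerComplement := by
  rintro ⟨n, hn⟩
  have him : 0 = x / π := by simpa using congrArg im hn
  exact div_ne_zero hx pi_ne_zero him.symm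

end Complex

section

open Complex

theorem hasSum_cotTerm {z : ℂ} (hz : z ∈ integerComplement) :
    HasSum (cotTerm z) (π * cot (π * z) - 1 / z) :=
  (summable_cotTerm hz).hasSum_iff_tendsto_nat.mpr (tendsto_logDeriv_euler_cot_sub hz)

theorem hasSum_two_mul_sq_div_sq_sub_sq {z : ℂ} (hz : z ∈ integerComplement) :
    HasSum (fun n : ℕ => 2 * z ^ 2 / (z ^ 2 - (n + 1) ^ 2)) (π * z * cot (π * z) - 1) := by
  have hz0 := integerComplement.ne_zero hz
  rw [show π * z * cot (π * z) - 1 = z * (π * cot (π * z) - 1 / z) by field_simp]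
  refine ((hasSum_cotTerm hz).mul_left z).congr_fun fun n => ?_
  rw [cotTerm_identity hz]
  ring

end

theorem hasSum_sq_div_sq_add_sq_mul_pi_sq {x : ℝ} (hx : x ≠ 0) :
    HasSum (fun n : ℕ => x ^ 2 / (x ^ 2 + ((n + 1 : ℕ) : ℝ) ^ 2 * π ^ 2))
      ((x * coth x - 1) / 2) := by
  have h := hasSum_two_mul_sq_div_sq_sub_sq (Complex.mul_I_div_pi_mem_integerComplement hx)
  rw [show (π : ℂ) * (x * Complex.I / π) = x * Complex.I by field_simp,
    Complex.mul_I_mul_cot_mul_I] at h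
  have hsum :
      (((x * coth x - 1) / 2 : ℝ) : ℂ) = (x * Complex.cosh x / Complex.sinh x - 1) / 2 := by
    simp only [coth]
    push_cast
    ring
  rw [← Complex.hasSum_ofReal, hsum]
  refine (h.div_const 2).congr_fun fun n => ?_
  push_cast
  field_simp
  rw [Complex.I_sq, mul_neg_one, ← neg_add', neg_div_neg_eq]

/-- Mittag-Leffler partial fraction expansion of the hyperbolic cotangent:
for `x ≠ 0`, `x coth x = 1 + 2 Σ_{n≥1} x²/(x² + n²π²)`, the series converging
(absolutely, as a series of nonnegative terms). -/
theorem coth_mittag_leffler (x : ℝ) (hx : x ≠ 0) :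
    Summable (fun n : ℕ => x ^ 2 / (x ^ 2 + ((n + 1 : ℕ) : ℝ) ^ 2 * π ^ 2)) ∧
    x * coth x
      = 1 + 2 * ∑' n : ℕ, x ^ 2 / (x ^ 2 + ((n + 1 : ℕ) : ℝ) ^ 2 * π ^ 2) := by
  have h := hasSum_sq_div_sq_add_sq_mul_pi_sq hx
  refine ⟨h.summable, ?_⟩
  rw [h.tsum_eq]
  ring
end

section
/- For γ₀ > 0, ω₀ > 0, ω_c ∈ ℝ, the principal-value integral (ω₀²/π) ∫_{-∞}^{∞} (1/ω) Im[−(ω² − ω₀² − ωω_c + iγ₀ω)^{-1}] dω = 1; equivalently, (ω₀²/π) ∫_{-∞}^{∞} Φ(ω) dω = 1 where Φ(ω) = γ₀/[(ω² − ω₀² − ωω_c)² + (γ₀ω)²]. -/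
/-!
With `u(ω) = ω - ω_c - ω₀²/ω` one has `(ω² - ω₀² - ω ω_c)² + (γ₀ ω)² = ω² (u² + γ₀²)` and
`u' = (ω² + ω₀²)/ω²`, so `(ω² + ω₀²) Φ = d/dω arctan (u/γ₀)`. On `(0, ∞)` the function `u` increases
from `-∞` to `∞`, hence `∫₀^∞ (ω² + ω₀²) Φ = π`. The inversion `ω ↦ -ω₀²/ω` maps `(-∞, 0)` onto
`(0, ∞)` and turns `ω² Φ(ω) dω` into `ω₀² Φ(t) dt`, so `∫₀^∞ ω² Φ = ω₀² ∫_{-∞}^0 Φ`, and the two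
half-lines together give `ω₀² ∫ Φ = π`.
-/

open Real MeasureTheory Set Filter Topology

noncomputable def resonanceKernel (γ₀ ω₀ c ω : ℝ) : ℝ :=
  γ₀ / ((ω ^ 2 - ω₀ ^ 2 - ω * c) ^ 2 + (γ₀ * ω) ^ 2)

noncomputable def resonancePhase (γ₀ ω₀ c ω : ℝ) : ℝ :=
  arctan ((ω - c - ω₀ ^ 2 / ω) / γ₀)

section Inversion

variable {a : ℝ}

lemma image_neg_div_Iio (ha : 0 < a) : (fun t : ℝ => -a / t) '' Iio 0 = Ioi 0 := by
  ext y
  constructor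
  · rintro ⟨t, ht, rfl⟩
    exact div_pos_of_neg_of_neg (neg_neg_of_pos ha) ht
  · intro hy
    exact ⟨-a / y, div_neg_of_neg_of_pos (neg_neg_of_pos ha) hy, by field_simp⟩

lemma neg_div_injective (ha : a ≠ 0) : Function.Injective (fun t : ℝ => -a / t) :=
  fun _ _ h => inv_injective (mul_left_cancel₀ (neg_ne_zero.mpr ha) h)

lemma hasDerivAt_neg_div {t : ℝ} (ht : t ≠ 0) :
    HasDerivAt (fun t : ℝ => -a / t) (a / t ^ 2) t := by
  simpa [div_eq_mul_inv] using (hasDerivAt_inv ht).const_mul (-a)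

variable {E : Type*} [NormedAddCommGroup E] [NormedSpace ℝ E]

lemma integrableOn_Ioi_iff_integrableOn_Iio_comp_neg_div (ha : 0 < a) (f : ℝ → E) :
    IntegrableOn f (Ioi 0) ↔ IntegrableOn (fun t => (a / t ^ 2) • f (-a / t)) (Iio 0) := by
  have := integrableOn_image_iff_integrableOn_abs_deriv_smul measurableSet_Iio
    (fun t ht => (hasDerivAt_neg_div (ne_of_lt ht)).hasDerivWithinAt)
    (neg_div_injective ha.ne').injOn f
  simpa only [image_neg_div_Iio ha, abs_of_nonneg (div_nonneg ha.le (sq_nonneg _))] using this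

lemma integral_Ioi_eq_integral_Iio_comp_neg_div (ha : 0 < a) (f : ℝ → E) :
    ∫ ω in Ioi 0, f ω = ∫ t in Iio 0, (a / t ^ 2) • f (-a / t) := by
  have := integral_image_eq_integral_abs_deriv_smul measurableSet_Iio
    (fun t ht => (hasDerivAt_neg_div (ne_of_lt ht)).hasDerivWithinAt)
    (neg_div_injective ha.ne').injOn f
  simpa only [image_neg_div_Iio ha, abs_of_nonneg (div_nonneg ha.le (sq_nonneg _))] using this

end Inversion

section Resonance

variable {γ₀ ω₀ : ℝ} (c : ℝ)

lemma resonance_denom_pos (hγ : γ₀ ≠ 0) (hω₀ : ω₀ ≠ 0) (ω : ℝ) :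
    0 < (ω ^ 2 - ω₀ ^ 2 - ω * c) ^ 2 + (γ₀ * ω) ^ 2 := by
  rcases eq_or_ne ω 0 with rfl | hω
  · simpa using (by positivity : 0 < (ω₀ ^ 2) ^ 2)
  · exact add_pos_of_nonneg_of_pos (sq_nonneg _) (by positivity)

lemma resonanceKernel_nonneg (hγ : 0 ≤ γ₀) (ω : ℝ) : 0 ≤ resonanceKernel γ₀ ω₀ c ω := by
  unfold resonanceKernel
  positivity

lemma continuous_resonanceKernel (hγ : γ₀ ≠ 0) (hω₀ : ω₀ ≠ 0) :
    Continuous (resonanceKernel γ₀ ω₀ c) :=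
  continuous_const.div (by fun_prop) fun ω => (resonance_denom_pos c hγ hω₀ ω).ne'

lemma resonanceKernel_neg_div (hω₀ : ω₀ ≠ 0) {t : ℝ} (ht : t ≠ 0) :
    resonanceKernel γ₀ ω₀ c (-ω₀ ^ 2 / t) = (t / ω₀) ^ 4 * resonanceKernel γ₀ ω₀ c t := by
  have hdenom : ((-ω₀ ^ 2 / t) ^ 2 - ω₀ ^ 2 - -ω₀ ^ 2 / t * c) ^ 2 + (γ₀ * (-ω₀ ^ 2 / t)) ^ 2
      = (ω₀ / t) ^ 4 * ((t ^ 2 - ω₀ ^ 2 - t * c) ^ 2 + (γ₀ * t) ^ 2) := by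
    field_simp
    ring
  rw [resonanceKernel, resonanceKernel, hdenom, ← div_div, div_eq_inv_mul _ ((ω₀ / t) ^ 4),
    ← inv_pow, inv_div, mul_div_assoc]

lemma smul_sq_mul_resonanceKernel_neg_div (hω₀ : ω₀ ≠ 0) {t : ℝ} (ht : t ≠ 0) :
    (ω₀ ^ 2 / t ^ 2) • ((-ω₀ ^ 2 / t) ^ 2 * resonanceKernel γ₀ ω₀ c (-ω₀ ^ 2 / t)) =
      ω₀ ^ 2 * resonanceKernel γ₀ ω₀ c t := by
  rw [smul_eq_mul, resonanceKernel_neg_div c hω₀ ht]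
  field_simp

lemma integral_Ioi_sq_mul_resonanceKernel (hω₀ : ω₀ ≠ 0) :
    ∫ ω in Ioi 0, ω ^ 2 * resonanceKernel γ₀ ω₀ c ω =
      ω₀ ^ 2 * ∫ t in Iio 0, resonanceKernel γ₀ ω₀ c t := by
  rw [integral_Ioi_eq_integral_Iio_comp_neg_div (a := ω₀ ^ 2) (by positivity),
    setIntegral_congr_fun measurableSet_Iio fun t ht =>
      smul_sq_mul_resonanceKernel_neg_div c hω₀ (ne_of_lt ht),
    integral_const_mul]

lemma integrableOn_Iio_resonanceKernel_iff (hω₀ : ω₀ ≠ 0) :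
    IntegrableOn (resonanceKernel γ₀ ω₀ c) (Iio 0) ↔
      IntegrableOn (fun ω => ω ^ 2 * resonanceKernel γ₀ ω₀ c ω) (Ioi 0) := by
  rw [integrableOn_Ioi_iff_integrableOn_Iio_comp_neg_div (a := ω₀ ^ 2) (by positivity)]
  exact (integrable_const_mul_iff (pow_ne_zero 2 hω₀).isUnit _).symm.trans <| integrableOn_congr_fun
    (fun t ht => (smul_sq_mul_resonanceKernel_neg_div c hω₀ (ne_of_lt ht)).symm) measurableSet_Iio

lemma hasDerivAt_resonancePhase (hγ : γ₀ ≠ 0) {x : ℝ} (hx : x ≠ 0) :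
    HasDerivAt (resonancePhase γ₀ ω₀ c) ((x ^ 2 + ω₀ ^ 2) * resonanceKernel γ₀ ω₀ c x) x := by
  have hu : HasDerivAt (fun ω => (ω - c - ω₀ ^ 2 / ω) / γ₀) ((1 + ω₀ ^ 2 / x ^ 2) / γ₀) x := by
    simpa [neg_div, ← sub_eq_add_neg] using
      (((hasDerivAt_id x).sub_const c).add (hasDerivAt_neg_div (a := ω₀ ^ 2) hx)).div_const γ₀
  refine ((hasDerivAt_arctan _).comp x hu).congr_deriv ?_
  have hD : (x ^ 2 - ω₀ ^ 2 - x * c) ^ 2 + (γ₀ * x) ^ 2 ≠ 0 := by positivity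
  unfold resonanceKernel
  field_simp
  ring

lemma tendsto_resonancePhase_nhdsGT_zero (hγ : 0 < γ₀) (hω₀ : ω₀ ≠ 0) :
    Tendsto (resonancePhase γ₀ ω₀ c) (𝓝[>] 0) (𝓝 (-(π / 2))) := by
  have hpole : Tendsto (fun ω : ℝ => ω₀ ^ 2 / ω) (𝓝[>] 0) atTop := by
    simpa [div_eq_mul_inv] using
      tendsto_inv_nhdsGT_zero.const_mul_atTop (pow_pos (abs_pos.mpr hω₀) 2)
  have hshift : Tendsto (fun ω : ℝ => ω - c) (𝓝[>] 0) (𝓝 (0 - c)) :=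
    (continuous_sub_right c).continuousWithinAt
  have harg := (hshift.add_atBot (tendsto_neg_atTop_atBot.comp hpole)).atBot_div_const hγ
  exact (tendsto_arctan_atBot.mono_right nhdsWithin_le_nhds).comp
    (by simpa [sub_eq_add_neg] using harg)

lemma tendsto_resonancePhase_atTop (hγ : 0 < γ₀) :
    Tendsto (resonancePhase γ₀ ω₀ c) atTop (𝓝 (π / 2)) := by
  have hpole : Tendsto (fun ω : ℝ => ω₀ ^ 2 / ω) atTop (𝓝 0) :=
    tendsto_const_nhds.div_atTop tendsto_id
  have harg := ((tendsto_atTop_add_const_right _ (-c) tendsto_id).atTop_add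
    hpole.neg).atTop_div_const hγ
  exact (tendsto_arctan_atTop.mono_right nhdsWithin_le_nhds).comp
    (by simpa [sub_eq_add_neg] using harg)

lemma integrableOn_and_integral_Ioi_sq_add_sq_mul_resonanceKernel (hγ : 0 < γ₀) (hω₀ : ω₀ ≠ 0) :
    IntegrableOn (fun ω => (ω ^ 2 + ω₀ ^ 2) * resonanceKernel γ₀ ω₀ c ω) (Ioi 0) ∧
      ∫ ω in Ioi 0, (ω ^ 2 + ω₀ ^ 2) * resonanceKernel γ₀ ω₀ c ω = π := by
  -- `resonancePhase` jumps at `0`; give it its right limit there so the FTC applies on `[0, ∞)`.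
  set F := Function.update (resonancePhase γ₀ ω₀ c) 0 (-(π / 2)) with hF
  have hcont : ContinuousWithinAt F (Ici 0) 0 := by
    rw [continuousWithinAt_update_same, Ici_sdiff_left]
    exact tendsto_resonancePhase_nhdsGT_zero c hγ hω₀
  have hderiv : ∀ x ∈ Ioi (0 : ℝ),
      HasDerivAt F ((x ^ 2 + ω₀ ^ 2) * resonanceKernel γ₀ ω₀ c x) x := fun x (hx : 0 < x) =>
    (hasDerivAt_resonancePhase c hγ.ne' hx.ne').congr_of_eventuallyEq <|
      (eventually_ne_nhds hx.ne').mono fun ω hω => Function.update_of_ne hω _ _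
  have hnonneg : ∀ x ∈ Ioi (0 : ℝ), 0 ≤ (x ^ 2 + ω₀ ^ 2) * resonanceKernel γ₀ ω₀ c x :=
    fun x _ => mul_nonneg (by positivity) (resonanceKernel_nonneg c hγ.le x)
  have hlim : Tendsto F atTop (𝓝 (π / 2)) :=
    (tendsto_resonancePhase_atTop c hγ).congr' <|
      (eventually_ne_atTop 0).mono fun ω hω => (Function.update_of_ne hω _ _).symm
  refine ⟨integrableOn_Ioi_deriv_of_nonneg hcont hderiv hnonneg hlim, ?_⟩
  rw [integral_Ioi_of_hasDerivAt_of_nonneg hcont hderiv hnonneg hlim, hF, Function.update_self]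
  ring

theorem integral_resonanceKernel (hγ : 0 < γ₀) (hω₀ : ω₀ ≠ 0) :
    ∫ ω, resonanceKernel γ₀ ω₀ c ω = π / ω₀ ^ 2 := by
  have ha : 0 < ω₀ ^ 2 := by positivity
  obtain ⟨hint, hπ⟩ := integrableOn_and_integral_Ioi_sq_add_sq_mul_resonanceKernel c hγ hω₀
  have hK_nonneg := resonanceKernel_nonneg (ω₀ := ω₀) c hγ.le
  obtain ⟨hsq, hconst⟩ : IntegrableOn (fun ω => ω ^ 2 * resonanceKernel γ₀ ω₀ c ω) (Ioi 0) ∧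
      IntegrableOn (fun ω => ω₀ ^ 2 * resonanceKernel γ₀ ω₀ c ω) (Ioi 0) := by
    refine (integrable_add_iff_of_nonneg ?_ ?_ ?_).mp (by simpa only [Pi.add_def, ← add_mul])
    · exact ((continuous_pow 2).mul (continuous_resonanceKernel c hγ.ne' hω₀)).aestronglyMeasurable
    · exact .of_forall fun ω => mul_nonneg (sq_nonneg ω) (hK_nonneg ω)
    · exact .of_forall fun ω => mul_nonneg ha.le (hK_nonneg ω)
  have hK_Ici : IntegrableOn (resonanceKernel γ₀ ω₀ c) (Ici 0) :=
    Iff.mpr integrableOn_Ici_iff_integrableOn_Ioi <|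
      (integrable_const_mul_iff ha.ne'.isUnit _).mp hconst
  have hK_Iio := (integrableOn_Iio_resonanceKernel_iff c hω₀).mpr hsq
  rw [eq_div_iff ha.ne', mul_comm]
  calc ω₀ ^ 2 * ∫ ω, resonanceKernel γ₀ ω₀ c ω
      = ω₀ ^ 2 * (∫ t in Iio 0, resonanceKernel γ₀ ω₀ c t) +
          ω₀ ^ 2 * ∫ ω in Ioi 0, resonanceKernel γ₀ ω₀ c ω := by
        rw [← intervalIntegral.integral_Iio_add_Ici hK_Iio hK_Ici, integral_Ici_eq_integral_Ioi,
          mul_add]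
    _ = (∫ ω in Ioi 0, ω ^ 2 * resonanceKernel γ₀ ω₀ c ω) +
          ∫ ω in Ioi 0, ω₀ ^ 2 * resonanceKernel γ₀ ω₀ c ω := by
        rw [integral_Ioi_sq_mul_resonanceKernel c hω₀, integral_const_mul]
    _ = π := by
        rw [← integral_add hsq hconst, ← hπ]
        simp only [add_mul]

end Resonance

/-- The classical (`n = 0`) term of the potential-energy Matsubara expansion:
`(ω₀²/π) ∫ Φ(ω) dω = 1` with `Φ(ω) = γ₀/[(ω²−ω₀²−ωω_c)² + (γ₀ω)²]`; equivalently,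
since `Im[−(ω²−ω₀²−ωω_c+iγ₀ω)⁻¹] = γ₀ω/[(ω²−ω₀²−ωω_c)² + (γ₀ω)²]`, the
principal-value integral `(ω₀²/π) ∫ (1/ω) Im[−(⋯)⁻¹] dω` equals `1`. -/
theorem classical_potential_term
    (γ₀ ω₀ ω_c : ℝ) (hγ : 0 < γ₀) (hω₀ : 0 < ω₀)
    (Φ : ℝ → ℝ)
    (hΦ : ∀ ω : ℝ, Φ ω = γ₀ / ((ω ^ 2 - ω₀ ^ 2 - ω * ω_c) ^ 2 + (γ₀ * ω) ^ 2)) :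
    (ω₀ ^ 2 / π) * ∫ ω : ℝ, Φ ω = 1 := by
  rw [show Φ = resonanceKernel γ₀ ω₀ ω_c from funext hΦ,
    integral_resonanceKernel ω_c hγ hω₀.ne']
  field_simp
end
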